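/- Under Condition A (in particular η ≤ C^{−1} m ‖μ‖^{−2} for a sufficiently large constant C), along the classification gradient-descent trajectory, for every r ∈ [m] and j, y ∈ {±1} and every 0 ≤ k ≤ T*: sign(⟨w_{j,r}^k, μ_y⟩) = sign(⟨w_{j,r}^0, μ_y⟩). That is, the sign of each signal inner product is invariant throughout training. -/

import Mathlib

noncomputable section
open MeasureTheory ProbabilityTheory Real
open scoped ENNReal NNReal RealInnerProductSpace BigOperators Classical

/-- The logistic loss `ℓ(z) = log(1 + exp(−z))`. -/
def logloss (z : ℝ) : ℝ := Real.log (1 + Real.exp (-z))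

/-- The derivative of the logistic loss, `ℓ'(z) = −(1 + exp z)⁻¹`. -/
def logloss' (z : ℝ) : ℝ := -(1 + Real.exp z)⁻¹

/-- The ±1 value of a Boolean class index: `true ↦ +1`, `false ↦ −1`. -/
def jval (j : Bool) : ℝ := if j then 1 else -1

/-- The Boolean class index of a ±1 label. -/
def bsel (t : ℝ) : Bool := if t = 1 then true else false

/-- The signal patch of a sample with label `t ∈ {±1}`:  `μ₁` if `t = 1`, else `μ₋₁`. -/
def sig {d : ℕ} (μP μM : EuclideanSpace ℝ (Fin d)) (t : ℝ) : EuclideanSpace ℝ (Fin d) :=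
  if t = 1 then μP else μM

/-- One branch `F_j` of the classifier:
`F_j(W_j, x) = (1/m) ∑_r (⟨w_{j,r}, x⁽¹⁾⟩² + ⟨w_{j,r}, x⁽²⁾⟩²)`. -/
def Fnet {d : ℕ} (m : ℕ) (W : Fin m → EuclideanSpace ℝ (Fin d))
    (x1 x2 : EuclideanSpace ℝ (Fin d)) : ℝ :=
  (m : ℝ)⁻¹ * ∑ r, (⟪W r, x1⟫ ^ 2 + ⟪W r, x2⟫ ^ 2)

/-- The classifier `f(W, x) = F_{+1}(W_{+1}, x) − F_{−1}(W_{−1}, x)`. -/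
def fnet {d : ℕ} (m : ℕ) (W : Bool → Fin m → EuclideanSpace ℝ (Fin d))
    (x1 x2 : EuclideanSpace ℝ (Fin d)) : ℝ :=
  Fnet m (W true) x1 x2 - Fnet m (W false) x1 x2

/-- The empirical logistic loss `L_S(W) = (1/n) ∑_i ℓ(y_i f(W, x_i))` on the training data
`x_i = (μ_{y_i}, ξ_i)`. -/
def LS {d : ℕ} (n m : ℕ) (μP μM : EuclideanSpace ℝ (Fin d)) (y : Fin n → ℝ)
    (ξ : Fin n → EuclideanSpace ℝ (Fin d))
    (W : Bool → Fin m → EuclideanSpace ℝ (Fin d)) : ℝ :=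
  (n : ℝ)⁻¹ * ∑ i, logloss (y i * fnet m W (sig μP μM (y i)) (ξ i))

/-- The gradient of the empirical loss with respect to the neuron `w_{j,r}`:
`∇_{w_{j,r}} L_S(W) = (1/(nm)) ∑_i ℓ'_i · j y_i · (⟨w_{j,r}, x_i⁽¹⁾⟩ x_i⁽¹⁾ + ⟨w_{j,r}, ξ_i⟩ ξ_i)`. -/
def gradLS {d : ℕ} (n m : ℕ) (μP μM : EuclideanSpace ℝ (Fin d)) (y : Fin n → ℝ)
    (ξ : Fin n → EuclideanSpace ℝ (Fin d))
    (W : Bool → Fin m → EuclideanSpace ℝ (Fin d)) (j : Bool) (r : Fin m) :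
    EuclideanSpace ℝ (Fin d) :=
  ((n : ℝ) * m)⁻¹ •
    ∑ i, (logloss' (y i * fnet m W (sig μP μM (y i)) (ξ i)) * jval j * y i) •
      (⟪W j r, sig μP μM (y i)⟫ • sig μP μM (y i) + ⟪W j r, ξ i⟫ • ξ i)

/-- The gradient-descent trajectory `W⁰ = W0`, `w_{j,r}^{k+1} = w_{j,r}^k − η ∇_{w_{j,r}} L_S(W^k)`. -/
def gd {d : ℕ} (n m : ℕ) (μP μM : EuclideanSpace ℝ (Fin d)) (y : Fin n → ℝ)
    (ξ : Fin n → EuclideanSpace ℝ (Fin d)) (η : ℝ)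
    (W0 : Bool → Fin m → EuclideanSpace ℝ (Fin d)) :
    ℕ → Bool → Fin m → EuclideanSpace ℝ (Fin d)
  | 0 => W0
  | k + 1 => fun j r =>
      gd n m μP μM y ξ η W0 k j r - η • gradLS n m μP μM y ξ (gd n m μP μM y ξ η W0 k) j r

/-- Polylogarithmic factor in all problem parameters (hidden by the tilde notations). -/
def plog (n m d : ℕ) (δ : ℝ) : ℝ := max 1 (Real.log ((n : ℝ) * m * d / δ))

/-- Condition A (conditions on the parameters for the classification results), with hidden
universal constant `C`. -/
def ConditionA (C : ℝ) (d n m : ℕ) (μnorm σξ σ0 η δ : ℝ) : Prop :=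
  -- d = Ω̃(max{n²mσ_ξ⁻¹‖μ‖, n⁴m})
  C * plog n m d δ ^ C * max ((n : ℝ) ^ 2 * m * σξ⁻¹ * μnorm) ((n : ℝ) ^ 4 * m) ≤ (d : ℝ) ∧
  -- m = Ω(log(n/δ)), n = Ω(log(m/δ))
  C * Real.log ((n : ℝ) / δ) ≤ (m : ℝ) ∧
  C * Real.log ((m : ℝ) / δ) ≤ (n : ℝ) ∧
  -- Ω̃(n²mσ_ξ⁻¹d⁻¹) ≤ σ₀ ≤ Õ(min{‖μ‖⁻¹, σ_ξ⁻¹d^{−1/2}})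
  C * plog n m d δ ^ C * ((n : ℝ) ^ 2 * m * σξ⁻¹ / d) ≤ σ0 ∧
  σ0 ≤ (C * plog n m d δ ^ C)⁻¹ * min μnorm⁻¹ (σξ⁻¹ / Real.sqrt d) ∧
  -- η ≤ Õ(min{m‖μ‖⁻², nmσ₀σ_ξ⁻¹d^{−1/2}, nmσ_ξ⁻²d⁻¹})
  η ≤ (C * plog n m d δ ^ C)⁻¹ *
    min ((m : ℝ) / μnorm ^ 2)
      (min ((n : ℝ) * m * σ0 / (σξ * Real.sqrt d)) ((n : ℝ) * m / (σξ ^ 2 * d)))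

/-- The types of the members of the joint family of random variables:
the `n` labels (real valued), the `n` noise patches and the `2m` initial weights (ℝ^d valued). -/
abbrev IdxT (d n m : ℕ) : Fin n ⊕ (Fin n ⊕ Bool × Fin m) → Type :=
  Sum.elim (fun _ => ℝ) (fun _ => EuclideanSpace ℝ (Fin d))

/-- Measurable-space structures on the members of the joint family. -/
def idxMS (d n m : ℕ) : (k : Fin n ⊕ (Fin n ⊕ Bool × Fin m)) → MeasurableSpace (IdxT d n m k)
  | Sum.inl _ => (inferInstance : MeasurableSpace ℝ)
  | Sum.inr _ => (inferInstance : MeasurableSpace (EuclideanSpace ℝ (Fin d)))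

/-- The joint family of random variables: labels, noise patches, initial weights. -/
def allRV {d n m : ℕ} {Ω : Type} (y : Fin n → Ω → ℝ)
    (ξ : Fin n → Ω → EuclideanSpace ℝ (Fin d))
    (w0 : Bool → Fin m → Ω → EuclideanSpace ℝ (Fin d)) :
    (k : Fin n ⊕ (Fin n ⊕ Bool × Fin m)) → Ω → IdxT d n m k
  | Sum.inl i => y i
  | Sum.inr (Sum.inl i) => ξ i
  | Sum.inr (Sum.inr p) => w0 p.1 p.2

/-!
STATEMENT 12 (sign invariance): Under Condition A (in particular η ≤ C⁻¹ m ‖μ‖⁻² for a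
sufficiently large constant C), along the classification gradient-descent trajectory, for
every r ∈ [m], j, y ∈ {±1} and every 0 ≤ k ≤ T*:
sign(⟨w_{j,r}^k, μ_y⟩) = sign(⟨w_{j,r}⁰, μ_y⟩).
-/

/-! The noise patches are orthogonal to the signals and `μ₁ ⊥ μ₋₁`, so a gradient step only
rescales `⟨w_{j,r}, μ_b⟩`: it multiplies it by `1 − ηρ` with `|ρ| ≤ ‖μ‖²/m`, because `|ℓ'| ≤ 1`.
Condition A gives `η‖μ‖²/m ≤ 1/2`, so the factor stays positive and the sign never changes. -/

lemma abs_logloss'_le_one (z : ℝ) : |logloss' z| ≤ 1 := by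
  have h : (0 : ℝ) < 1 + Real.exp z := by positivity
  rw [logloss', abs_neg, abs_inv, abs_of_pos h]
  exact inv_le_one_of_one_le₀ (by linarith [Real.exp_pos z])

lemma abs_jval (j : Bool) : |jval j| = 1 := by
  cases j <;> simp [jval]

lemma sign_mul_of_pos {c : ℝ} (hc : 0 < c) (x : ℝ) : Real.sign (c * x) = Real.sign x := by
  rcases lt_trichotomy x 0 with h | rfl | h
  · rw [Real.sign_of_neg h, Real.sign_of_neg (mul_neg_of_pos_of_neg hc h)]
  · rw [mul_zero]
  · rw [Real.sign_of_pos h, Real.sign_of_pos (mul_pos hc h)]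

section Signal

variable {d : ℕ} {μP μM : EuclideanSpace ℝ (Fin d)}

lemma norm_sig (hnorm : ‖μP‖ = ‖μM‖) (t : ℝ) : ‖sig μP μM t‖ = ‖μP‖ := by
  unfold sig; split_ifs <;> simp [hnorm]

lemma inner_sig_eq_zero {ξ : EuclideanSpace ℝ (Fin d)} (hξ : ⟪ξ, μP⟫ = 0 ∧ ⟪ξ, μM⟫ = 0)
    (t : ℝ) : ⟪ξ, sig μP μM t⟫ = 0 := by
  unfold sig; split_ifs <;> simp [hξ]

lemma sig_eq_or_inner_sig_eq_zero (hortho : ⟪μP, μM⟫ = 0) (s t : ℝ) :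
    sig μP μM s = sig μP μM t ∨ ⟪sig μP μM s, sig μP μM t⟫ = 0 := by
  unfold sig; split_ifs <;> simp [hortho, real_inner_comm μP μM]

end Signal

lemma inner_mul_inner_of_eq_or_inner_eq_zero {d : ℕ} {s v : EuclideanSpace ℝ (Fin d)}
    (h : s = v ∨ ⟪s, v⟫ = 0) (w : EuclideanSpace ℝ (Fin d)) :
    ⟪w, s⟫ * ⟪s, v⟫ = ⟪s, v⟫ * ⟪w, v⟫ := by
  rcases h with rfl | h
  · ring
  · simp [h]

/-- The factor `ρ` with `⟪∇_{w_{j,r}} L_S(W), v⟫ = ρ ⟪w_{j,r}, v⟫`. For `v = μ_b` only the samples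
with `y_i = b` contribute, which gives the paper's `(|S_b|‖μ‖²/(nm)) ℓ'ᵢ j b`. -/
def signalCoeff {d : ℕ} (n m : ℕ) (μP μM : EuclideanSpace ℝ (Fin d)) (y : Fin n → ℝ)
    (ξ : Fin n → EuclideanSpace ℝ (Fin d))
    (W : Bool → Fin m → EuclideanSpace ℝ (Fin d)) (j : Bool) (v : EuclideanSpace ℝ (Fin d)) :
    ℝ :=
  ((n : ℝ) * m)⁻¹ * ∑ i, logloss' (y i * fnet m W (sig μP μM (y i)) (ξ i)) * jval j * y i *
    ⟪sig μP μM (y i), v⟫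

section Gradient

variable {d n m : ℕ} {μP μM : EuclideanSpace ℝ (Fin d)} {y : Fin n → ℝ}
  {ξ : Fin n → EuclideanSpace ℝ (Fin d)} {v : EuclideanSpace ℝ (Fin d)}

lemma inner_gradLS_eq_signalCoeff_mul (hξ : ∀ i, ⟪ξ i, v⟫ = 0)
    (hsig : ∀ i, sig μP μM (y i) = v ∨ ⟪sig μP μM (y i), v⟫ = 0)
    (W : Bool → Fin m → EuclideanSpace ℝ (Fin d)) (j : Bool) (r : Fin m) :
    ⟪gradLS n m μP μM y ξ W j r, v⟫ = signalCoeff n m μP μM y ξ W j v * ⟪W j r, v⟫ := by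
  simp only [gradLS, signalCoeff, real_inner_smul_left, sum_inner, inner_add_left, hξ,
    mul_zero, add_zero, Finset.mul_sum, Finset.sum_mul]
  refine Finset.sum_congr rfl fun i _ => ?_
  rw [inner_mul_inner_of_eq_or_inner_eq_zero (hsig i)]
  ring

lemma abs_signalCoeff_le (hn : n ≠ 0) (hy : ∀ i, |y i| ≤ 1)
    (hnorm : ∀ i, ‖sig μP μM (y i)‖ ≤ ‖v‖)
    (W : Bool → Fin m → EuclideanSpace ℝ (Fin d)) (j : Bool) :
    |signalCoeff n m μP μM y ξ W j v| ≤ ‖v‖ ^ 2 / m := by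
  have hterm : ∀ i, |logloss' (y i * fnet m W (sig μP μM (y i)) (ξ i)) * jval j * y i *
      ⟪sig μP μM (y i), v⟫| ≤ ‖v‖ ^ 2 := by
    intro i
    have hinner : |⟪sig μP μM (y i), v⟫| ≤ ‖v‖ ^ 2 :=
      (abs_real_inner_le_norm _ _).trans (by nlinarith [hnorm i, norm_nonneg v])
    simp only [abs_mul, abs_jval, mul_one]
    calc |logloss' _| * |y i| * |⟪sig μP μM (y i), v⟫| ≤ 1 * 1 * ‖v‖ ^ 2 := by
          gcongr
          exacts [abs_logloss'_le_one _, hy i]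
      _ = ‖v‖ ^ 2 := by ring
  calc |signalCoeff n m μP μM y ξ W j v|
      ≤ ((n : ℝ) * m)⁻¹ * ∑ _i : Fin n, ‖v‖ ^ 2 := by
        rw [signalCoeff, abs_mul, abs_of_nonneg (by positivity)]
        gcongr
        exact (Finset.abs_sum_le_sum_abs _ _).trans (Finset.sum_le_sum fun i _ => hterm i)
    _ = ‖v‖ ^ 2 / m := by
        rw [Finset.sum_const, Finset.card_univ, Fintype.card_fin, nsmul_eq_mul]
        field_simp

variable {η : ℝ} {W0 : Bool → Fin m → EuclideanSpace ℝ (Fin d)}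

lemma inner_gd_succ (hξ : ∀ i, ⟪ξ i, v⟫ = 0)
    (hsig : ∀ i, sig μP μM (y i) = v ∨ ⟪sig μP μM (y i), v⟫ = 0) (k : ℕ) (j : Bool) (r : Fin m) :
    ⟪gd n m μP μM y ξ η W0 (k + 1) j r, v⟫ =
      (1 - η * signalCoeff n m μP μM y ξ (gd n m μP μM y ξ η W0 k) j v) *
        ⟪gd n m μP μM y ξ η W0 k j r, v⟫ := by
  rw [gd, inner_sub_left, real_inner_smul_left, inner_gradLS_eq_signalCoeff_mul hξ hsig]
  ring

lemma sign_inner_gd_eq (hξ : ∀ i, ⟪ξ i, v⟫ = 0)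
    (hsig : ∀ i, sig μP μM (y i) = v ∨ ⟪sig μP μM (y i), v⟫ = 0) (j : Bool)
    (hstep : ∀ k, η * signalCoeff n m μP μM y ξ (gd n m μP μM y ξ η W0 k) j v < 1)
    (k : ℕ) (r : Fin m) :
    Real.sign ⟪gd n m μP μM y ξ η W0 k j r, v⟫ = Real.sign ⟪W0 j r, v⟫ := by
  induction k with
  | zero => rfl
  | succ k ih => rw [inner_gd_succ hξ hsig, sign_mul_of_pos (by linarith [hstep k]), ih]

end Gradient

lemma ConditionA.eta_le {C : ℝ} {d n m : ℕ} {μnorm σξ σ0 η δ : ℝ} (hC : 1 ≤ C) (hη : 0 < η)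
    (h : ConditionA C d n m μnorm σξ σ0 η δ) : η ≤ C⁻¹ * (m / μnorm ^ 2) := by
  obtain ⟨-, -, -, -, -, hηA⟩ := h
  set M := min ((m : ℝ) / μnorm ^ 2)
    (min ((n : ℝ) * m * σ0 / (σξ * Real.sqrt d)) ((n : ℝ) * m / (σξ ^ 2 * d)))
  have hplog : 1 ≤ plog n m d δ ^ C := Real.one_le_rpow (le_max_left _ _) (by linarith)
  have hfactor : (C * plog n m d δ ^ C)⁻¹ ≤ C⁻¹ :=
    inv_anti₀ (by linarith) (le_mul_of_one_le_right (by linarith) hplog)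
  have hM : 0 ≤ M := by
    by_contra! hM
    have : (C * plog n m d δ ^ C)⁻¹ * M < 0 := mul_neg_of_pos_of_neg (by positivity) hM
    linarith
  calc η ≤ (C * plog n m d δ ^ C)⁻¹ * M := hηA
    _ ≤ C⁻¹ * M := by gcongr
    _ ≤ C⁻¹ * (m / μnorm ^ 2) := by gcongr; exact min_le_left _ _

theorem signal_sign_invariance :
    ∃ C : ℝ, 1 ≤ C ∧
      ∀ (d n m : ℕ) (μP μM : EuclideanSpace ℝ (Fin d)) (σξ σ0 η δ : ℝ)
        (y : Fin n → ℝ) (ξ : Fin n → EuclideanSpace ℝ (Fin d))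
        (W0 : Bool → Fin m → EuclideanSpace ℝ (Fin d)) (Tstar : ℕ),
        0 < d → 0 < n → 0 < m → 0 < σξ → 0 < σ0 → 0 < η → 0 < δ → δ < 1 →
        ⟪μP, μM⟫ = 0 → ‖μP‖ = ‖μM‖ → μP ≠ 0 →
        -- the labels take values in {±1}
        (∀ i, y i = 1 ∨ y i = -1) →
        -- the noise patches are orthogonal to the signals
        (∀ i, ⟪ξ i, μP⟫ = 0 ∧ ⟪ξ i, μM⟫ = 0) →
        ConditionA C d n m ‖μP‖ σξ σ0 η δ →
        -- the maximal horizon T* = η⁻¹·poly(‖μ‖⁻¹, σ_ξ⁻²d⁻¹, σ₀⁻¹, n, m, d)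
        (Tstar : ℝ) ≤ η⁻¹ * (‖μP‖⁻¹ + (σξ ^ 2 * d)⁻¹ + σ0⁻¹ + n + m + d) ^ C →
        ∀ k ≤ Tstar, ∀ (j b : Bool) (r : Fin m),
          Real.sign ⟪gd n m μP μM y ξ η W0 k j r, sig μP μM (jval b)⟫ =
            Real.sign ⟪W0 j r, sig μP μM (jval b)⟫ := by
  refine ⟨2, by norm_num, ?_⟩
  intro d n m μP μM σξ σ0 η δ y ξ W0 Tstar _ hn hm _ _ hη _ _ hortho hnorm hμP hy hξ hA _ k _ j b r
  set v := sig μP μM (jval b)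
  have hv : ‖v‖ = ‖μP‖ := norm_sig hnorm _
  have hμ : 0 < ‖μP‖ ^ 2 := by positivity
  have hηv : η * (‖v‖ ^ 2 / m) ≤ 2⁻¹ := by
    have := hA.eta_le (by norm_num) hη
    rw [hv, ← le_div_iff₀ (by positivity)]
    calc η ≤ 2⁻¹ * (m / ‖μP‖ ^ 2) := this
      _ = 2⁻¹ / (‖μP‖ ^ 2 / m) := by field_simp
  refine sign_inner_gd_eq (fun i => inner_sig_eq_zero (hξ i) _)
    (fun i => sig_eq_or_inner_sig_eq_zero hortho _ _) j (fun k' => ?_) k r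
  have hy' : ∀ i, |y i| ≤ 1 := fun i => by rcases hy i with h | h <;> simp [h]
  have hcoeff := abs_signalCoeff_le (ξ := ξ) hn.ne' hy'
    (fun i => ((norm_sig hnorm _).trans hv.symm).le) (gd n m μP μM y ξ η W0 k') j
  calc η * signalCoeff n m μP μM y ξ (gd n m μP μM y ξ η W0 k') j v
      ≤ η * (‖v‖ ^ 2 / m) := by gcongr; exact (le_abs_self _).trans hcoeff
    _ < 1 := by linarith
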